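/- The generalized Riemann tensor of a torsion-free Courant algebroid connection, GRm(w,z,x,y) := (1/2)[w^δ y^β (x^α[D_α,D_β]z_δ + z^α[D_α,D_δ]x_β − (D_α x_β)(D^α z_δ))], is C∞(M)-multilinear in all four arguments and satisfies the symmetries GRm_{αβγδ} = GRm_{[αβ]γδ} = GRm_{αβ[γδ]} = GRm_{δγβα}. -/

import Mathlib

/-- Algebraic model of a Courant algebroid: the commutative ring `R` plays the
role of the smooth functions `C^∞(M)`, `E` plays the role of the module of
sections `Γ(E)`, and vector fields on `M` are modelled as `Derivation ℝ R R`.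
The four axioms of Definition 2.1 are `jacobi`, `leibniz`, `invariance`,
`symmetrized`; `Dop` is the operator `𝒟 = ρ^T ∘ d`, characterized by
`⟨𝒟 f, w⟩ = ρ(w) f`. -/
structure CourantAlgebroid (R : Type) [CommRing R] [Algebra ℝ R]
    (E : Type) [AddCommGroup E] [Module R E] : Type where
  bracket : E → E → E
  ip : E →ₗ[R] E →ₗ[R] R
  rho : E →ₗ[R] Derivation ℝ R R
  Dop : R → E
  ip_symm : ∀ u v, ip u v = ip v u
  ip_nondeg : ∀ u, (∀ v, ip u v = 0) → u = 0
  ip_Dop : ∀ f w, ip (Dop f) w = rho w f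
  bracket_add_left : ∀ u v w, bracket (u + v) w = bracket u w + bracket v w
  bracket_add_right : ∀ u v w, bracket u (v + w) = bracket u v + bracket u w
  jacobi : ∀ u v w, bracket u (bracket v w) = bracket (bracket u v) w + bracket v (bracket u w)
  leibniz : ∀ u (f : R) v, bracket u (f • v) = f • bracket u v + rho u f • v
  invariance : ∀ u v w, rho u (ip v w) = ip (bracket u v) w + ip v (bracket u w)
  symmetrized : ∀ u v, bracket u v + bracket v u = Dop (ip u v)

/-- A Courant algebroid connection on `E`: `C^∞`-linear in the direction,
a derivation in the second slot, and compatible with the pairing. -/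
structure CAConnection (R : Type) [CommRing R] [Algebra ℝ R]
    (E : Type) [AddCommGroup E] [Module R E]
    (CA : CourantAlgebroid R E) : Type where
  D : E → E → E
  add_left : ∀ u v w, D (u + v) w = D u w + D v w
  smul_left : ∀ (f : R) u v, D (f • u) v = f • D u v
  add_right : ∀ u v w, D u (v + w) = D u v + D u w
  leibniz : ∀ u (f : R) v, D u (f • v) = f • D u v + CA.rho u f • v
  compat : ∀ u v w, CA.rho u (CA.ip v w) = CA.ip (D u v) w + CA.ip v (D u w)

/-- The torsion of a Courant algebroid connection, as a trilinear form:
`T_D(u,v,w) = ⟨D_u v − D_v u − [u,v], w⟩ + ⟨D_w u, v⟩`. -/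
def torsion {R : Type} [CommRing R] [Algebra ℝ R]
    {E : Type} [AddCommGroup E] [Module R E]
    {CA : CourantAlgebroid R E} (D : CAConnection R E CA) (u v w : E) : R :=
  CA.ip (D.D u v - D.D v u - CA.bracket u v) w + CA.ip (D.D w u) v

/-- The second covariant derivative `D²_{x,y} z = D_x D_y z − D_{D_x y} z`. -/
def Hess {R : Type} [CommRing R] [Algebra ℝ R]
    {E : Type} [AddCommGroup E] [Module R E]
    {CA : CourantAlgebroid R E} (D : CAConnection R E CA) (x y z : E) : E :=
  D.D x (D.D y z) - D.D (D.D x y) z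

open Finset in
/-- The generalized Riemann tensor of a torsion-free Courant algebroid
connection (Definition 4.1), written invariantly:
`GRm(w,z,x,y) = ½( ⟨(D²_{x,y} − D²_{y,x})z, w⟩ + ⟨(D²_{z,w} − D²_{w,z})x, y⟩
  − Σ_α ⟨D_{e_α}x, y⟩⟨D_{e^α}z, w⟩ )`,
the contraction `(D_α x_β)(D^α z_δ) y^β w^δ` being taken in the frame `b`
with dual frame `b'`. -/
noncomputable def GRm {R : Type} [CommRing R] [Algebra ℝ R]
    {E : Type} [AddCommGroup E] [Module R E] [Module ℝ E]
    {CA : CourantAlgebroid R E} (D : CAConnection R E CA)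
    (n : ℕ) (b b' : Fin n → E) (w z x y : E) : R :=
  (1/2 : ℝ) •
    (CA.ip (Hess D x y z - Hess D y x z) w
     + CA.ip (Hess D z w x - Hess D w z x) y
     - ∑ k, CA.ip (D.D (b k) x) y * CA.ip (D.D (b' k) z) w)

/-! With `R(x, y) = D²_{x,y} − D²_{y,x}`, metric compatibility of `D` gives
`⟨R(x, y)z, w⟩ + ⟨z, R(x, y)w⟩ = −ρ(D_x y − D_y x − [x, y])⟨z, w⟩`, and vanishing torsion turns the
right side into `⟨D_{𝒟⟨z,w⟩} x, y⟩`. Expanding `𝒟⟨z, w⟩` in the frame, this is exactly the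
symmetrization in `(z, w)` of the contraction term of `GRm`, so `GRm` is skew in its first two
arguments. Since `η` is symmetric the contraction term is invariant under `(x, y) ↔ (z, w)`, whence
`GRm(w, z, x, y) = GRm(y, x, z, w)`. Tensoriality in `w` is immediate because `R(z, w)` is tensorial
in `w`, and the two symmetries carry it to the other slots. -/

namespace CourantAlgebroid

variable {R : Type} [CommRing R] [Algebra ℝ R] {E : Type} [AddCommGroup E] [Module R E]
  (CA : CourantAlgebroid R E)

theorem eq_of_forall_ip_eq {u v : E} (h : ∀ t, CA.ip u t = CA.ip v t) : u = v :=
  sub_eq_zero.mp <| CA.ip_nondeg _ fun t => by rw [map_sub, LinearMap.sub_apply, h, sub_self]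

theorem Dop_add (f g : R) : CA.Dop (f + g) = CA.Dop f + CA.Dop g :=
  CA.eq_of_forall_ip_eq fun t => by simp only [map_add, LinearMap.add_apply, ip_Dop]

/-- Write `𝒟⟨x, y⟩ = [x, y] + [y, x]` and apply the Jacobi identity to both brackets. -/
theorem bracket_Dop_ip (u x y : E) :
    CA.bracket u (CA.Dop (CA.ip x y)) = CA.Dop (CA.rho u (CA.ip x y)) := by
  rw [← CA.symmetrized x y, CA.bracket_add_right, CA.jacobi u x y, CA.jacobi u y x, CA.invariance,
    CA.Dop_add, ← CA.symmetrized (CA.bracket u x) y, ← CA.symmetrized x (CA.bracket u y)]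
  abel

theorem rho_bracket_apply_ip (u v x y : E) :
    CA.rho (CA.bracket u v) (CA.ip x y) =
      CA.rho u (CA.rho v (CA.ip x y)) - CA.rho v (CA.rho u (CA.ip x y)) := by
  have h := CA.invariance u (CA.Dop (CA.ip x y)) v
  rw [CA.ip_Dop, bracket_Dop_ip, CA.ip_Dop, CA.ip_Dop] at h
  linear_combination -h

end CourantAlgebroid

theorem Finset.sum_mul_sum_smul_of_symm {ι S A : Type*} [Fintype ι] [CommSemiring A] [SMul S A]
    [SMulCommClass S A A] (η : ι → ι → S) (hη : ∀ i j, η i j = η j i) (F G : ι → A) :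
    ∑ i, F i * ∑ j, η i j • G j = ∑ i, G i * ∑ j, η i j • F j := by
  simp only [Finset.mul_sum, mul_smul_comm]
  rw [Finset.sum_comm]
  exact Finset.sum_congr rfl fun i _ => Finset.sum_congr rfl fun j _ => by rw [hη, mul_comm]

namespace CAConnection

variable {R : Type} [CommRing R] [Algebra ℝ R] {E : Type} [AddCommGroup E] [Module R E]
  {CA : CourantAlgebroid R E} (D : CAConnection R E CA)

@[simps]
def derivₗ (x : E) : E →ₗ[R] E where
  toFun u := D.D u x
  map_add' u v := D.add_left u v x
  map_smul' f u := D.smul_left f u x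

def curvature (x y z : E) : E :=
  Hess D x y z - Hess D y x z

def frameContraction {ι : Type} [Fintype ι] (b b' : ι → E) (x y z w : E) : R :=
  ∑ k, CA.ip (D.D (b k) x) y * CA.ip (D.D (b' k) z) w

theorem curvature_skew (x y z : E) : -D.curvature y x z = D.curvature x y z :=
  neg_sub _ _

theorem curvature_smul_middle (f : R) (x y z : E) :
    D.curvature x (f • y) z = f • D.curvature x y z := by
  simp only [curvature, Hess, D.smul_left, D.leibniz, D.add_left, smul_sub]
  abel

theorem curvature_add_middle (x y y' z : E) :
    D.curvature x (y + y') z = D.curvature x y z + D.curvature x y' z := by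
  simp only [curvature, Hess, D.add_left, D.add_right]
  abel

theorem ip_Hess_add_ip_Hess (z w x y : E) :
    CA.ip (Hess D z w x) y + CA.ip x (Hess D z w y) =
      CA.rho z (CA.rho w (CA.ip x y)) - CA.rho (D.D z w) (CA.ip x y)
        - CA.ip (D.D z x) (D.D w y) - CA.ip (D.D w x) (D.D z y) := by
  have hzw := congrArg (CA.rho z) (D.compat w x y)
  rw [map_add] at hzw
  simp only [Hess, map_sub, LinearMap.sub_apply]
  linear_combination D.compat (D.D z w) x y - hzw - D.compat z (D.D w x) y
    - D.compat z x (D.D w y)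

theorem ip_curvature_add_ip_curvature (x y z w : E) :
    CA.ip (D.curvature x y z) w + CA.ip z (D.curvature x y w) =
      -CA.rho (D.D x y - D.D y x - CA.bracket x y) (CA.ip z w) := by
  simp only [curvature, map_sub, LinearMap.sub_apply, Derivation.sub_apply]
  linear_combination D.ip_Hess_add_ip_Hess x y z w - D.ip_Hess_add_ip_Hess y x z w
    - CA.rho_bracket_apply_ip x y z w

theorem ip_curvature_add_ip_curvature_of_torsion_eq_zero
    (htf : ∀ u v w, torsion D u v w = 0) (x y z w : E) :
    CA.ip (D.curvature x y z) w + CA.ip z (D.curvature x y w) =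
      CA.ip (D.D (CA.Dop (CA.ip z w)) x) y := by
  have h := htf x y (CA.Dop (CA.ip z w))
  rw [torsion, CA.ip_symm, CA.ip_Dop] at h
  rw [ip_curvature_add_ip_curvature]
  linear_combination -h

variable {ι : Type} [Fintype ι] {b b' : ι → E}

theorem ip_D_Dop_eq_sum (hrepr : ∀ x, ∑ k, CA.ip x (b' k) • b k = x) (g : R) (x y : E) :
    CA.ip (D.D (CA.Dop g) x) y = ∑ k, CA.rho (b' k) g * CA.ip (D.D (b k) x) y := by
  rw [← D.derivₗ_apply x, ← hrepr (CA.Dop g)]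
  simp only [map_sum, map_smul, LinearMap.sum_apply, LinearMap.smul_apply, smul_eq_mul,
    derivₗ_apply, CA.ip_Dop]

theorem frameContraction_add_swap (hrepr : ∀ x, ∑ k, CA.ip x (b' k) • b k = x) (x y z w : E) :
    D.frameContraction b b' x y z w + D.frameContraction b b' x y w z =
      CA.ip (D.D (CA.Dop (CA.ip z w)) x) y := by
  rw [D.ip_D_Dop_eq_sum hrepr, frameContraction, frameContraction, ← Finset.sum_add_distrib]
  refine Finset.sum_congr rfl fun k _ => ?_
  rw [D.compat, CA.ip_symm (D.D (b' k) w) z]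
  ring

theorem frameContraction_comm [Module ℝ E] [IsScalarTower ℝ R E] (η : ι → ι → ℝ)
    (hηsym : ∀ i j, η i j = η j i) (hb' : ∀ i, b' i = ∑ j, η i j • b j) (x y z w : E) :
    D.frameContraction b b' x y z w = D.frameContraction b b' z w x y := by
  have expand : ∀ k x y, CA.ip (D.D (b' k) x) y = ∑ j, η k j • CA.ip (D.D (b j) x) y := by
    intro k x y
    rw [← D.derivₗ_apply x, hb' k]
    simp only [map_sum, LinearMap.map_smul_of_tower, LinearMap.sum_apply, LinearMap.smul_apply,
      derivₗ_apply]
  simp only [frameContraction, expand]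
  exact Finset.sum_mul_sum_smul_of_symm η hηsym _ _

theorem frameContraction_smul_right (f : R) (x y z w : E) :
    D.frameContraction b b' x y z (f • w) = f * D.frameContraction b b' x y z w := by
  simp only [frameContraction, map_smul, smul_eq_mul, Finset.mul_sum]
  exact Finset.sum_congr rfl fun k _ => by ring

theorem frameContraction_add_right (x y z w w' : E) :
    D.frameContraction b b' x y z (w + w') =
      D.frameContraction b b' x y z w + D.frameContraction b b' x y z w' := by
  simp only [frameContraction, map_add, mul_add, Finset.sum_add_distrib]

end CAConnection

section GRm

variable {R : Type} [CommRing R] [Algebra ℝ R] {E : Type} [AddCommGroup E] [Module R E]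
  [Module ℝ E] {CA : CourantAlgebroid R E} (D : CAConnection R E CA) {n : ℕ} {b b' : Fin n → E}

theorem GRm_eq (w z x y : E) :
    GRm D n b b' w z x y = (1/2 : ℝ) • (CA.ip (D.curvature x y z) w + CA.ip (D.curvature z w x) y
      - D.frameContraction b b' x y z w) :=
  rfl

theorem GRm_smul_first (f : R) (w z x y : E) :
    GRm D n b b' (f • w) z x y = f * GRm D n b b' w z x y := by
  rw [GRm_eq, GRm_eq, D.curvature_smul_middle, D.frameContraction_smul_right, mul_smul_comm]
  simp only [map_smul, LinearMap.smul_apply, smul_eq_mul, mul_add, mul_sub]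

theorem GRm_add_first (w w' z x y : E) :
    GRm D n b b' (w + w') z x y = GRm D n b b' w z x y + GRm D n b b' w' z x y := by
  rw [GRm_eq, GRm_eq, GRm_eq, D.curvature_add_middle, D.frameContraction_add_right, ← smul_add]
  simp only [map_add, LinearMap.add_apply]
  congr 1
  ring

theorem GRm_swap_first_two (htf : ∀ u v w, torsion D u v w = 0)
    (hrepr : ∀ x, ∑ k, CA.ip x (b' k) • b k = x) (w z x y : E) :
    GRm D n b b' w z x y = -GRm D n b b' z w x y := by
  rw [eq_neg_iff_add_eq_zero, GRm_eq, GRm_eq, ← smul_add, ← D.curvature_skew z w,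
    CA.ip_symm (D.curvature x y w)]
  convert smul_zero (1/2 : ℝ) using 2
  simp only [map_neg, LinearMap.neg_apply]
  linear_combination D.ip_curvature_add_ip_curvature_of_torsion_eq_zero htf x y z w
    - D.frameContraction_add_swap hrepr x y z w

theorem GRm_swap_pairs [IsScalarTower ℝ R E] (η : Fin n → Fin n → ℝ)
    (hηsym : ∀ i j, η i j = η j i) (hb' : ∀ i, b' i = ∑ j, η i j • b j) (w z x y : E) :
    GRm D n b b' w z x y = GRm D n b b' y x z w := by
  rw [GRm_eq, GRm_eq, D.frameContraction_comm η hηsym hb', add_comm]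

end GRm

open Finset in
/-- Propositions 4.2, 4.3: the generalized Riemann tensor of a
torsion-free Courant algebroid connection is `C^∞(M)`-multilinear in all four
arguments, and has the symmetries
`GRm_{αβγδ} = GRm_{[αβ]γδ} = GRm_{αβ[γδ]} = GRm_{δγβα}`; in argument form:
antisymmetric in `(w,z)`, antisymmetric in `(x,y)`, and symmetric under
`(w,z,x,y) ↦ (y,x,z,w)`.  The frame `b` with dual frame `b'` is admissible:
`b' i = Σ_j η i j • b j` with `η` real symmetric, and reproduces sections. -/
theorem GRm_tensorial_and_symmetries
    (R : Type) [CommRing R] [Algebra ℝ R]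
    (E : Type) [AddCommGroup E] [Module R E] [Module ℝ E] [IsScalarTower ℝ R E]
    (CA : CourantAlgebroid R E) (D : CAConnection R E CA)
    (htf : ∀ u v w, torsion D u v w = 0)
    (n : ℕ) (b b' : Fin n → E)
    (η : Fin n → Fin n → ℝ) (hηsym : ∀ i j, η i j = η j i)
    (hb' : ∀ i, b' i = ∑ j, η i j • b j)
    (hrepr : ∀ x, ∑ k, CA.ip x (b' k) • b k = x) :
    (∀ (f : R) w z x y, GRm D n b b' (f • w) z x y = f * GRm D n b b' w z x y) ∧
    (∀ (f : R) w z x y, GRm D n b b' w (f • z) x y = f * GRm D n b b' w z x y) ∧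
    (∀ (f : R) w z x y, GRm D n b b' w z (f • x) y = f * GRm D n b b' w z x y) ∧
    (∀ (f : R) w z x y, GRm D n b b' w z x (f • y) = f * GRm D n b b' w z x y) ∧
    (∀ w w' z x y, GRm D n b b' (w + w') z x y =
      GRm D n b b' w z x y + GRm D n b b' w' z x y) ∧
    (∀ w z z' x y, GRm D n b b' w (z + z') x y =
      GRm D n b b' w z x y + GRm D n b b' w z' x y) ∧
    (∀ w z x x' y, GRm D n b b' w z (x + x') y =
      GRm D n b b' w z x y + GRm D n b b' w z x' y) ∧
    (∀ w z x y y', GRm D n b b' w z x (y + y') =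
      GRm D n b b' w z x y + GRm D n b b' w z x y') ∧
    (∀ w z x y, GRm D n b b' w z x y = - GRm D n b b' z w x y) ∧
    (∀ w z x y, GRm D n b b' w z x y = - GRm D n b b' w z y x) ∧
    (∀ w z x y, GRm D n b b' w z x y = GRm D n b b' y x z w) := by
  have skew := GRm_swap_first_two D htf hrepr
  have pairs := GRm_swap_pairs D η hηsym hb'
  have smul₂ : ∀ (f : R) w z x y, GRm D n b b' w (f • z) x y = f * GRm D n b b' w z x y :=
    fun f w z x y => by rw [skew, GRm_smul_first, skew w z, mul_neg]
  have add₂ : ∀ w z z' x y, GRm D n b b' w (z + z') x y =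
      GRm D n b b' w z x y + GRm D n b b' w z' x y :=
    fun w z z' x y => by rw [skew, GRm_add_first, skew z, skew z', neg_add, neg_neg, neg_neg]
  refine ⟨GRm_smul_first D, smul₂, fun f w z x y => ?_, fun f w z x y => ?_,
    GRm_add_first D, add₂, fun w z x x' y => ?_, fun w z x y y' => ?_, skew,
    fun w z x y => ?_, pairs⟩
  · rw [pairs, smul₂, ← pairs]
  · rw [pairs, GRm_smul_first, ← pairs]
  · rw [pairs w z, add₂, ← pairs w z x, ← pairs w z x']
  · rw [pairs w z, GRm_add_first, ← pairs w z x y, ← pairs w z x y']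
  · rw [pairs, skew, pairs x]
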